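/- Soundness of symbolic assumption: if the SMT entailment relation is sound, then for every boolean expression b and interpretation I, sassume(b) ⤳_I assume(b), i.e. the symbolic assume mutator safely approximates the semiconcrete assume mutator under I. -/
import Mathlib


/- ## Outcomes, satisfaction, coverage, sequential composition -/

/-- An outcome over state space `S` with answers in `A`: a singleton, a demonic
choice over a family of outcomes, or an angelic choice over a family of outcomes. -/
inductive Outcome (S : Type) (A : Type) : Type 1 where
  | single (σ : S) (a : A)
  | demonic (I : Type) (f : I → Outcome S A)
  | angelic (I : Type) (f : I → Outcome S A)

namespace Outcome

/-- Satisfaction of a postcondition by an outcome. -/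
def sat {S A : Type} : Outcome S A → (S → A → Prop) → Prop
  | single σ a, Q => Q σ a
  | demonic _ f, Q => ∀ i, (f i).sat Q
  | angelic _ f, Q => ∃ i, (f i).sat Q

/-- Coverage of outcomes: `φ` covers `φ'` iff every postcondition satisfied by `φ`
is satisfied by `φ'`. -/
def cover {S A : Type} (φ φ' : Outcome S A) : Prop :=
  ∀ Q : S → A → Prop, φ.sat Q → φ'.sat Q

/-- Sequential composition (with answers) of an outcome with an answer-indexed
family of mutators. -/
def bind {S A S' B : Type} : Outcome S A → (A → S → Outcome S' B) → Outcome S' B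
  | single σ a, C => C a σ
  | demonic I f, C => demonic I (fun i => (f i).bind C)
  | angelic I f, C => angelic I (fun i => (f i).bind C)

end Outcome

/-- Failure: the angelic choice over zero alternatives. -/
def failO {S A : Type} : Outcome S A := .angelic PEmpty (fun x => x.elim)
/-- Nontermination: the demonic choice over zero alternatives. -/
def blockO {S A : Type} : Outcome S A := .demonic PEmpty (fun x => x.elim)
/-- Angelic guard: `⨁ P. φ`. -/
def aguard {S A : Type} (P : Prop) (φ : Outcome S A) : Outcome S A :=
  .angelic (PLift P) (fun _ => φ)
/-- Demonic guard: `⨂ P. φ`. -/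
def dguard {S A : Type} (P : Prop) (φ : Outcome S A) : Outcome S A :=
  .demonic (PLift P) (fun _ => φ)
/-- Binary demonic choice of outcomes. -/
def dchoiceO {S A : Type} (φ₁ φ₂ : Outcome S A) : Outcome S A :=
  .demonic Bool (fun t => if t then φ₁ else φ₂)

/-- Sequential composition of an answer-free outcome with a mutator: `φ; C`. -/
def oseq {S S' : Type} (φ : Outcome S Unit) (C : S → Outcome S' Unit) : Outcome S' Unit :=
  φ.bind (fun _ => C)

/-- Sequential composition of mutators with answers: `x ← C; C'(x)`. -/
def mbind {S S' S'' A B : Type} (C : S → Outcome S' A) (C' : A → S' → Outcome S'' B) :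
    S → Outcome S'' B :=
  fun σ => (C σ).bind C'

/-- Sequential composition `C; C'` where the first mutator is answer-free. -/
def mthen {S S' S'' A : Type} (C : S → Outcome S' Unit) (C' : S' → Outcome S'' A) :
    S → Outcome S'' A :=
  fun σ => (C σ).bind (fun _ => C')

/-- Side-effect-only sequential composition `C ;, C'`: run `C`, then `C'`, and keep
`C`'s answer. -/
def msideSeq {S S' S'' A : Type} (C : S → Outcome S' A) (C' : S' → Outcome S'' Unit) :
    S → Outcome S'' A :=
  fun σ => (C σ).bind (fun a σ' => (C' σ').bind (fun _ σ'' => .single σ'' a))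

/-- Coverage of mutators, lifted pointwise from coverage of outcomes. -/
def mcover {S S' A : Type} (C C' : S → Outcome S' A) : Prop :=
  ∀ σ, (C σ).cover (C' σ)

/-- Binary demonic choice of mutators. -/
def mdchoice {S S' A : Type} (C₁ C₂ : S → Outcome S' A) : S → Outcome S' A :=
  fun σ => dchoiceO (C₁ σ) (C₂ σ)

/- ## Syntax of the programming language and of assertions; semiconcrete states -/

/-- Integer expressions. -/
inductive IExp (V : Type) where
  | lit (z : ℤ)
  | var (x : V)
  | add (e₁ e₂ : IExp V)
  | sub (e₁ e₂ : IExp V)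

/-- Boolean expressions. -/
inductive BExp (V : Type) where
  | eq (e₁ e₂ : IExp V)
  | lt (e₁ e₂ : IExp V)
  | not (b : BExp V)

/-- Evaluation of an integer expression under a store. -/
def IExp.eval {V : Type} (s : V → ℤ) : IExp V → ℤ
  | .lit z => z
  | .var x => s x
  | .add e₁ e₂ => e₁.eval s + e₂.eval s
  | .sub e₁ e₂ => e₁.eval s - e₂.eval s

/-- Evaluation of a boolean expression under a store. -/
def BExp.eval {V : Type} (s : V → ℤ) : BExp V → Bool
  | .eq e₁ e₂ => decide (e₁.eval s = e₂.eval s)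
  | .lt e₁ e₂ => decide (e₁.eval s < e₂.eval s)
  | .not b => !(b.eval s)

/-- Predicate names: the built-in points-to and malloc-block predicates, plus
user-defined predicates drawn from `P`. -/
inductive PredName (P : Type) where
  | pts
  | mb
  | user (q : P)
deriving DecidableEq

/-- A chunk `p(v̄)`: a predicate name together with its integer arguments. -/
abbrev Chunk (P : Type) := PredName P × List ℤ

/-- A heap: a multiset of chunks. -/
abbrev Heap (P : Type) := Multiset (Chunk P)

/-- A (semiconcrete) state: a store paired with a heap. -/
abbrev SCState (V P : Type) := (V → ℤ) × Heap P

/-- Function update `f[x := v]`. -/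
def updF {V α : Type} [DecidableEq V] (s : V → α) (x : V) (v : α) : V → α :=
  fun y => if y = x then v else s y

/-- Function update by lists, `f[x̄ := v̄]`. -/
def updsF {V α : Type} [DecidableEq V] : (V → α) → List V → List α → (V → α)
  | s, [], _ => s
  | s, _ :: _, [] => s
  | s, x :: xs, v :: vs => updsF (updF s x v) xs vs

/-- Assertions: boolean expressions, predicate assertions with variable patterns,
separating conjunction, and conditional assertions. -/
inductive Assn (V P : Type) where
  | bexp (b : BExp V)
  | pred (p : PredName P) (es : List (IExp V)) (xs : List V)
  | star (a₁ a₂ : Assn V P)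
  | ite (b : BExp V) (a₁ a₂ : Assn V P)

/- ## Semiconcrete auxiliary mutators; assertion consumption and production -/

/-- `assume(b)`: blocks unless `b` evaluates to true. -/
def assumeB {V P : Type} (b : BExp V) : SCState V P → Outcome (SCState V P) Unit :=
  fun σ => dguard (b.eval σ.1 = true) (.single σ ())

/-- `assert(b)`: fails unless `b` evaluates to true. -/
def assertB {V P : Type} (b : BExp V) : SCState V P → Outcome (SCState V P) Unit :=
  fun σ => aguard (b.eval σ.1 = true) (.single σ ())

/-- Semiconcrete consumption of a multiset of chunks. -/
def consumeChunks {V P : Type} [DecidableEq P] (h' : Heap P) :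
    SCState V P → Outcome (SCState V P) Unit :=
  fun σ => aguard (h' ≤ σ.2) (.single (σ.1, σ.2 - h') ())

/-- Semiconcrete consumption of a single chunk. -/
def consumeChunk {V P : Type} [DecidableEq P] (α : Chunk P) :
    SCState V P → Outcome (SCState V P) Unit :=
  consumeChunks (α ::ₘ 0)

/-- Semiconcrete production of a multiset of chunks. -/
def produceChunks {V P : Type} (h' : Heap P) :
    SCState V P → Outcome (SCState V P) Unit :=
  fun σ => .single (σ.1, σ.2 + h') ()

/-- Semiconcrete production of a single chunk. -/
def produceChunk {V P : Type} (α : Chunk P) :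
    SCState V P → Outcome (SCState V P) Unit :=
  produceChunks (α ::ₘ 0)

/-- The leak check: fails if the heap is nonempty, blocks otherwise. -/
def leakcheck {V P : Type} : SCState V P → Outcome (SCState V P) Unit :=
  fun σ => aguard (σ.2 = 0) blockO

/-- The mutator that answers the current store. -/
def storeM {V P : Type} : SCState V P → Outcome (SCState V P) (V → ℤ) :=
  fun σ => .single σ σ.1

/-- `with(s', C)`: run `C` under store `s'`, then restore the original store,
answering `C`'s answer. -/
def withS {V P A : Type} (s' : V → ℤ) (C : SCState V P → Outcome (SCState V P) A) :
    SCState V P → Outcome (SCState V P) A :=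
  fun σ => (C (s', σ.2)).bind (fun a σ' => .single (σ.1, σ'.2) a)

/-- The mutator that does nothing. -/
def noop {V P : Type} : SCState V P → Outcome (SCState V P) Unit :=
  fun σ => .single σ ()

/-- Consumption of an assertion. -/
def consume {V P : Type} [DecidableEq V] [DecidableEq P] :
    Assn V P → SCState V P → Outcome (SCState V P) Unit
  | .bexp b => assertB b
  | .pred p es xs => fun σ =>
      .angelic {vs : List ℤ // vs.length = xs.length} (fun vs =>
        (consumeChunk (p, es.map (IExp.eval σ.1) ++ vs.1) σ).bind
          (fun _ σ' => .single (updsF σ'.1 xs vs.1, σ'.2) ()))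
  | .star a₁ a₂ => mthen (consume a₁) (consume a₂)
  | .ite b a₁ a₂ =>
      mdchoice (mthen (assumeB b) (consume a₁)) (mthen (assumeB (.not b)) (consume a₂))

/-- Production of an assertion. -/
def produce {V P : Type} [DecidableEq V] [DecidableEq P] :
    Assn V P → SCState V P → Outcome (SCState V P) Unit
  | .bexp b => assumeB b
  | .pred p es xs => fun σ =>
      .demonic {vs : List ℤ // vs.length = xs.length} (fun vs =>
        (produceChunk (p, es.map (IExp.eval σ.1) ++ vs.1) σ).bind
          (fun _ σ' => .single (updsF σ'.1 xs vs.1, σ'.2) ()))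
  | .star a₁ a₂ => mthen (produce a₁) (produce a₂)
  | .ite b a₁ a₂ =>
      mdchoice (mthen (assumeB b) (produce a₁)) (mthen (assumeB (.not b)) (produce a₂))

/- ## Symbolic states, interpretations, safe approximation -/

/-- Terms: integer literals, symbols, additions, and subtractions. -/
inductive STerm (Y : Type) where
  | lit (z : ℤ)
  | sym (ς : Y)
  | add (t₁ t₂ : STerm Y)
  | sub (t₁ t₂ : STerm Y)
deriving DecidableEq

/-- Formulae: equalities, inequalities, and negations. -/
inductive SForm (Y : Type) where
  | eq (t₁ t₂ : STerm Y)
  | lt (t₁ t₂ : STerm Y)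
  | not (φ : SForm Y)
deriving DecidableEq

/-- An interpretation: a partial function from symbols to integers. -/
def Interp (Y : Type) := Y → Option ℤ

/-- Evaluation of a term under an interpretation (partial). -/
def STerm.evalI {Y : Type} (I : Interp Y) : STerm Y → Option ℤ
  | .lit z => some z
  | .sym ς => I ς
  | .add t₁ t₂ => do pure ((← t₁.evalI I) + (← t₂.evalI I))
  | .sub t₁ t₂ => do pure ((← t₁.evalI I) - (← t₂.evalI I))

/-- Evaluation of a formula under an interpretation (partial). -/
def SForm.evalI {Y : Type} (I : Interp Y) : SForm Y → Option Bool
  | .eq t₁ t₂ => do pure (decide ((← t₁.evalI I) = (← t₂.evalI I)))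
  | .lt t₁ t₂ => do pure (decide ((← t₁.evalI I) < (← t₂.evalI I)))
  | .not φ => do pure (!(← φ.evalI I))

/-- A path condition holds under `I` if all its formulae evaluate to true. -/
def pcHolds {Y : Type} (I : Interp Y) (Φ : Set (SForm Y)) : Prop :=
  ∀ φ ∈ Φ, φ.evalI I = some true

/-- Logical consequence `Φ ⊨ φ`. -/
def entails {Y : Type} (Φ : Set (SForm Y)) (φ : SForm Y) : Prop :=
  ∀ I : Interp Y, pcHolds I Φ → φ.evalI I = some true

/-- Soundness of an SMT entailment relation. -/
def smtSound {Y : Type} (smt : Set (SForm Y) → SForm Y → Prop) : Prop :=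
  ∀ Φ φ, smt Φ φ → entails Φ φ

/-- The symbols `ς` marked as used by the path condition via `ς = ς`. -/
def UsedSyms {Y : Type} (Φ : Set (SForm Y)) : Set Y :=
  {ς | SForm.eq (.sym ς) (.sym ς) ∈ Φ}

/-- The free symbols of a term. -/
def STerm.FS {Y : Type} : STerm Y → Set Y
  | .lit _ => ∅
  | .sym ς => {ς}
  | .add t₁ t₂ => t₁.FS ∪ t₂.FS
  | .sub t₁ t₂ => t₁.FS ∪ t₂.FS

/-- A symbolic chunk: a predicate name with term arguments. -/
abbrev SChunk (P Y : Type) := PredName P × List (STerm Y)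

/-- A symbolic state: a path condition, a symbolic store, and a symbolic heap. -/
abbrev SymState (V P Y : Type) := Set (SForm Y) × (V → STerm Y) × Multiset (SChunk P Y)

/-- Symbolic evaluation of an integer expression under a symbolic store. -/
def IExp.sevalT {V Y : Type} (ss : V → STerm Y) : IExp V → STerm Y
  | .lit z => .lit z
  | .var x => ss x
  | .add e₁ e₂ => .add (e₁.sevalT ss) (e₂.sevalT ss)
  | .sub e₁ e₂ => .sub (e₁.sevalT ss) (e₂.sevalT ss)

/-- Symbolic evaluation of a boolean expression under a symbolic store. -/
def BExp.sevalF {V Y : Type} (ss : V → STerm Y) : BExp V → SForm Y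
  | .eq e₁ e₂ => .eq (e₁.sevalT ss) (e₂.sevalT ss)
  | .lt e₁ e₂ => .lt (e₁.sevalT ss) (e₂.sevalT ss)
  | .not b => .not (b.sevalF ss)

/-- The domain of an interpretation. -/
def Interp.dom {Y : Type} (I : Interp Y) : Set Y := {ς | I ς ≠ none}

/-- `I'` extends `I`. -/
def Interp.ext {Y : Type} (I' I : Interp Y) : Prop :=
  ∀ ς v, I ς = some v → I' ς = some v

/-- Evaluation of a symbolic chunk under an interpretation (partial). -/
def SChunk.evalI {P Y : Type} (I : Interp Y) (α : SChunk P Y) : Option (Chunk P) :=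
  (α.2.mapM (STerm.evalI I)).map (fun l => (α.1, l))

/-- The symbolic heap `hh` evaluates to the heap `h` under `I`. -/
def sheapEval {P Y : Type} (I : Interp Y) (hh : Multiset (SChunk P Y)) (h : Heap P) : Prop :=
  hh.map (SChunk.evalI I) = h.map some

/-- `I(σ̂) = σ`: the interpretation of a symbolic state is the given semiconcrete
state. Requires the domain of `I` to be exactly the used symbols, the path
condition to hold, and store and heap to evaluate accordingly. -/
def interpState {V P Y : Type} (I : Interp Y) (st : SymState V P Y) (σ : SCState V P) : Prop :=
  I.dom = UsedSyms st.1 ∧ pcHolds I st.1 ∧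
    (∀ x, (st.2.1 x).evalI I = some (σ.1 x)) ∧ sheapEval I st.2.2 σ.2

/-- The interpretation mutator `ρ_I`. -/
def rhoM {V P Y : Type} (I : Interp Y) : SymState V P Y → Outcome (SCState V P) Unit :=
  fun st => .demonic {p : Interp Y × SCState V P // Interp.ext p.1 I ∧ interpState p.1 st p.2}
    (fun p => .single p.1.2 ())

/-- Safe approximation `C ⤳_I C'` of a semiconcrete mutator by a symbolic mutator. -/
def approxM {V P Y A : Type} (I : Interp Y)
    (C : SymState V P Y → Outcome (SymState V P Y) A)
    (C' : SCState V P → Outcome (SCState V P) A) : Prop :=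
  mcover (msideSeq C (rhoM I)) (mthen (rhoM I) C')

/-- The mutator `fresh`, relative to a choice function `fs` picking a fresh symbol:
marks the chosen symbol as used and answers it. -/
def freshM {V P Y : Type} (fs : Set (SForm Y) → Y) :
    SymState V P Y → Outcome (SymState V P Y) Y :=
  fun st =>
    .single (insert (SForm.eq (.sym (fs st.1)) (.sym (fs st.1))) st.1, st.2.1, st.2.2) (fs st.1)

/-- Symbolic assumption of a formula: blocks if the SMT solver derives its negation,
otherwise adds it to the path condition. -/
def sassumeF {V P Y : Type} (smt : Set (SForm Y) → SForm Y → Prop) (φ : SForm Y) :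
    SymState V P Y → Outcome (SymState V P Y) Unit :=
  fun st => dguard (¬ smt st.1 (SForm.not φ)) (.single (insert φ st.1, st.2.1, st.2.2) ())

/-- Symbolic assumption of a boolean expression. -/
def sassumeB {V P Y : Type} (smt : Set (SForm Y) → SForm Y → Prop) (b : BExp V) :
    SymState V P Y → Outcome (SymState V P Y) Unit :=
  fun st => sassumeF smt (b.sevalF st.2.1) st

lemma sevalT_evalI {V Y : Type} (I : Interp Y) (ss : V → STerm Y) (s : V → ℤ)
    (h : ∀ x, (ss x).evalI I = some (s x)) :
    ∀ e : IExp V, (e.sevalT ss).evalI I = some (e.eval s)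
  | .lit z => rfl
  | .var x => h x
  | .add e₁ e₂ => by
      simp [IExp.sevalT, IExp.eval, STerm.evalI, sevalT_evalI I ss s h e₁,
        sevalT_evalI I ss s h e₂]
  | .sub e₁ e₂ => by
      simp [IExp.sevalT, IExp.eval, STerm.evalI, sevalT_evalI I ss s h e₁,
        sevalT_evalI I ss s h e₂]

lemma sevalF_evalI {V Y : Type} (I : Interp Y) (ss : V → STerm Y) (s : V → ℤ)
    (h : ∀ x, (ss x).evalI I = some (s x)) :
    ∀ b : BExp V, (b.sevalF ss).evalI I = some (b.eval s)
  | .eq e₁ e₂ => by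
      simp [BExp.sevalF, BExp.eval, SForm.evalI, sevalT_evalI I ss s h]
  | .lt e₁ e₂ => by
      simp [BExp.sevalF, BExp.eval, SForm.evalI, sevalT_evalI I ss s h]
  | .not b => by
      simp [BExp.sevalF, BExp.eval, SForm.evalI, sevalF_evalI I ss s h b]

/-- soundness of symbolic assumption: if the SMT entailment relation is
sound, then `sassume(b)` safely approximates `assume(b)` under every interpretation. -/
theorem sassume_sound {V P Y : Type} (smt : Set (SForm Y) → SForm Y → Prop)
    (hsmt : smtSound smt) (b : BExp V) (I : Interp Y) :
    approxM I (sassumeB smt b : SymState V P Y → _) (assumeB b) := by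
  rintro ⟨Φ, ss, hh⟩ Q H
  simp only [msideSeq, sassumeB, sassumeF, dguard, rhoM, mthen, assumeB,
    Outcome.bind, Outcome.sat] at H ⊢
  rintro ⟨⟨I', σ⟩, hext, hdom, hpc, hst, hhp⟩ ⟨hb⟩
  set φ := b.sevalF ss with hφdef
  have hφ : φ.evalI I' = some true := by
    rw [sevalF_evalI I' ss σ.1 hst b, hb]
  have hnsmt : ¬ smt Φ (.not φ) := by
    intro hs
    have := hsmt Φ _ hs I' hpc
    simp [SForm.evalI, hφ] at this
  have hdom' : I'.dom = UsedSyms (insert φ Φ) := by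
    ext ς
    constructor
    · intro hς
      rw [hdom] at hς
      exact Set.mem_of_mem_of_subset hς (fun x hx => Set.mem_insert_iff.mpr (Or.inr hx))
    · intro hς
      rcases Set.mem_insert_iff.mp hς with h1 | h1
      · rw [← h1] at hφ
        simp only [SForm.evalI, STerm.evalI] at hφ
        cases hI : I' ς with
        | none => rw [hI] at hφ; simp at hφ
        | some v => simp [Interp.dom, hI]
      · rw [hdom]; exact h1
  have hpc' : pcHolds I' (insert φ Φ) := by
    intro ψ hψ
    rcases Set.mem_insert_iff.mp hψ with h1 | h1
    · rw [← h1] at hφ; exact hφ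
    · exact hpc ψ h1
  exact H ⟨hnsmt⟩ ⟨⟨I', σ⟩, hext, hdom', hpc', hst, hhp⟩
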